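/- Let M be a model and M_∂ its dual model (same frame; a variable's value at a state is unchanged if it is exactly true or exactly false, while 'both' and 'neither' are swapped). Then for every formula φ of the language with ¬, ∧, ∨, ■, 𝐈 and every state w: if φ is exactly true (true and non-false) at w in M it is exactly true at w in M_∂; if φ is both true and false at w in M it is neither true nor false at w in M_∂; if φ is neither at w in M it is both at w in M_∂; and if φ is exactly false at w in M it is exactly false at w in M_∂. -/

import Mathlib

/-- Formulas of the language with ¬, ∧, ∨, □, ■, 𝐈 and ▲. -/
inductive Form : Type
  | var : ℕ → Form
  | neg : Form → Form
  | conj : Form → Form → Form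
  | disj : Form → Form → Form
  | box : Form → Form
  | bbox : Form → Form
  | ign : Form → Form
  | tri : Form → Form

/-- A Kripke model for Belnap–Dunn modal logic. -/
structure Model (W : Type) where
  R : W → W → Prop
  vp : ℕ → W → Prop
  vn : ℕ → W → Prop

mutual
  /-- support of truth -/
  def tr {W : Type} (M : Model W) : Form → W → Prop
    | .var n, w => M.vp n w
    | .neg φ, w => fa M φ w
    | .conj φ ψ, w => tr M φ w ∧ tr M ψ w
    | .disj φ ψ, w => tr M φ w ∨ tr M ψ w
    | .box φ, w => ∀ w', M.R w w' → tr M φ w'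
    | .bbox φ, w => (∀ w', M.R w w' → tr M φ w') ∧
        ∀ w₁ w₂, M.R w w₁ → M.R w w₂ → fa M φ w₁ → fa M φ w₂
    | .ign φ, w => tr M φ w ∧ (∀ w', M.R w w' → w' ≠ w → fa M φ w') ∧
        ∀ w₁ w₂, M.R w w₁ → w₁ ≠ w → M.R w w₂ → w₂ ≠ w → tr M φ w₁ → tr M φ w₂
    | .tri φ, w => (∀ w₁ w₂, M.R w w₁ → M.R w w₂ →
          (tr M φ w₁ → tr M φ w₂) ∧ (fa M φ w₁ → fa M φ w₂)) ∧
        ∀ w', M.R w w' → tr M φ w' ∨ fa M φ w'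
  /-- support of falsity -/
  def fa {W : Type} (M : Model W) : Form → W → Prop
    | .var n, w => M.vn n w
    | .neg φ, w => tr M φ w
    | .conj φ ψ, w => fa M φ w ∨ fa M ψ w
    | .disj φ ψ, w => fa M φ w ∧ fa M ψ w
    | .box φ, w => ∃ w', M.R w w' ∧ fa M φ w'
    | .bbox φ, w => (∃ w', M.R w w' ∧ fa M φ w') ∨
        ∃ w₁ w₂, M.R w w₁ ∧ M.R w w₂ ∧ tr M φ w₁ ∧ ¬ tr M φ w₂
    | .ign φ, w => fa M φ w ∨ (∃ w', M.R w w' ∧ w' ≠ w ∧ tr M φ w') ∨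
        ∃ w₁ w₂, (M.R w w₁ ∧ w₁ ≠ w) ∧ (M.R w w₂ ∧ w₂ ≠ w) ∧ ¬ fa M φ w₁ ∧ fa M φ w₂
    | .tri φ, w => (∃ w₁ w₂, M.R w w₁ ∧ M.R w w₂ ∧ tr M φ w₁ ∧ ¬ tr M φ w₂) ∨
        (∃ w₁ w₂, M.R w w₁ ∧ M.R w w₂ ∧ fa M φ w₁ ∧ ¬ fa M φ w₂) ∨
        (∃ w₁ w₂, M.R w w₁ ∧ M.R w w₂ ∧ tr M φ w₁ ∧ fa M φ w₂)
end

/-- φ contains an occurrence of □ -/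
def hasBox : Form → Prop
  | .var _ => False
  | .neg φ => hasBox φ
  | .conj φ ψ => hasBox φ ∨ hasBox ψ
  | .disj φ ψ => hasBox φ ∨ hasBox ψ
  | .box _ => True
  | .bbox φ => hasBox φ
  | .ign φ => hasBox φ
  | .tri φ => hasBox φ

/-- φ contains an occurrence of ■ -/
def hasBBox : Form → Prop
  | .var _ => False
  | .neg φ => hasBBox φ
  | .conj φ ψ => hasBBox φ ∨ hasBBox ψ
  | .disj φ ψ => hasBBox φ ∨ hasBBox ψ
  | .box φ => hasBBox φ
  | .bbox _ => True
  | .ign φ => hasBBox φ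
  | .tri φ => hasBBox φ

/-- φ contains an occurrence of 𝐈 -/
def hasIgn : Form → Prop
  | .var _ => False
  | .neg φ => hasIgn φ
  | .conj φ ψ => hasIgn φ ∨ hasIgn ψ
  | .disj φ ψ => hasIgn φ ∨ hasIgn ψ
  | .box φ => hasIgn φ
  | .bbox φ => hasIgn φ
  | .ign _ => True
  | .tri φ => hasIgn φ

/-- φ contains an occurrence of ▲ -/
def hasTri : Form → Prop
  | .var _ => False
  | .neg φ => hasTri φ
  | .conj φ ψ => hasTri φ ∨ hasTri ψ
  | .disj φ ψ => hasTri φ ∨ hasTri ψ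
  | .box φ => hasTri φ
  | .bbox φ => hasTri φ
  | .ign φ => hasTri φ
  | .tri _ => True

/-- validity of the sequent φ ⊢ χ on the frame (W,R) -/
def validOn {W : Type} (R : W → W → Prop) (φ χ : Form) : Prop :=
  ∀ (vp vn : ℕ → W → Prop) (w : W), tr ⟨R, vp, vn⟩ φ w → tr ⟨R, vp, vn⟩ χ w

/-- ♦φ := ¬■¬φ -/
def dia (φ : Form) : Form := .neg (.bbox (.neg φ))

/-- the dual model: exactly true/exactly false values preserved, gluts and gaps swapped. -/
def dual {W : Type} (M : Model W) : Model W :=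
  ⟨M.R, fun n w => ¬ M.vn n w, fun n w => ¬ M.vp n w⟩

/-! In the dual model a formula is true exactly where it is not false in `M`, and false exactly
where it is not true in `M`. By induction on the formula: every truth clause of `¬, ∧, ∨, □, ■, 𝐈`
is the classical negation of the matching falsity clause read in `M` (for the second conjunct of
■ after exchanging the witnesses `w₁, w₂`), and vice versa. The four cases of the theorem then
follow propositionally. -/

section DualModel

variable {W : Type} (M : Model W)

@[simp] lemma dual_R : (dual M).R = M.R := rfl

theorem tr_dual_iff_not_fa_and_fa_dual_iff_not_tr {φ : Form} (hφ : ¬ hasTri φ) :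
    (∀ w, tr (dual M) φ w ↔ ¬ fa M φ w) ∧ (∀ w, fa (dual M) φ w ↔ ¬ tr M φ w) := by
  induction φ with
  | var n => simp [tr, fa, dual]
  | neg φ ih => simp only [tr, fa]; exact (ih hφ).symm
  | conj φ ψ ihφ ihψ | disj φ ψ ihφ ihψ =>
    simp only [hasTri, not_or] at hφ
    simp only [tr, fa, (ihφ hφ.1).1, (ihφ hφ.1).2, (ihψ hφ.2).1, (ihψ hφ.2).2]
    grind
  | box φ ih | bbox φ ih | ign φ ih =>
    simp only [tr, fa, dual_R, (ih hφ).1, (ih hφ).2]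
    grind
  | tri φ => exact absurd trivial hφ

end DualModel

/-- dual-model lemma for the language {¬,∧,∨,■,𝐈}. -/
theorem dual_model_lemma {W : Type} (M : Model W) (φ : Form)
    (h1 : ¬ hasBox φ) (h2 : ¬ hasTri φ) (w : W) :
    (tr M φ w ∧ ¬ fa M φ w → tr (dual M) φ w ∧ ¬ fa (dual M) φ w) ∧
    (tr M φ w ∧ fa M φ w → ¬ tr (dual M) φ w ∧ ¬ fa (dual M) φ w) ∧
    (¬ tr M φ w ∧ ¬ fa M φ w → tr (dual M) φ w ∧ fa (dual M) φ w) ∧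
    (¬ tr M φ w ∧ fa M φ w → ¬ tr (dual M) φ w ∧ fa (dual M) φ w) := by
  obtain ⟨htr, hfa⟩ := tr_dual_iff_not_fa_and_fa_dual_iff_not_tr M h2
  rw [htr, hfa]
  tauto
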